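/- Let n ≥ 1, let E_A > 0 and E_1, …, E_n > 0, and let T_A > T_B > 0. On ℂ² ⊗ (ℂ²)^{⊗n} with standard basis {e_{(b₀,b)} : b₀ ∈ {0,1}, b ∈ {0,1}^n}, let H be the diagonal Hamiltonian with H e_{(b₀,b)} = (E_A·b₀ + Σ_{j=1}^n E_j b_j) · e_{(b₀,b)}, and let ρ = γ_{T_A}(E_A) ⊗ γ_{T_B}(E_1) ⊗ ⋯ ⊗ γ_{T_B}(E_n), where γ_T(E) = diag(1, e^{−E/T})/(1 + e^{−E/T}). Assume there is no b ∈ {0,1}^n with Σ_j b_j E_j = E_A·T_B/T_A, and assume there exists b ∈ {0,1}^n with E_A·T_B/T_A < Σ_j b_j E_j < E_A. Then for every unitary U attaining the minimum of tr(U ρ U† H) over all unitaries, the vector U (e_1 ⊗ e_0 ⊗ ⋯ ⊗ e_0) lies in the span of { e_0 ⊗ e_b : b ∈ {0,1}^n, E_A·T_B/T_A < Σ_j b_j E_j < E_A }. Hence measuring the last n qubits of U(e_1 ⊗ e_{0…0}) in the computational basis yields, with certainty, a binary word b solving the KNAPSACK feasibility problem E_A > Σ_j b_j E_j > E_A·T_B/T_A.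 -/

import Mathlib

/-- The Gibbs occupation probability of level `j ∈ {0,1}` of a two-level
system with energy gap `E` at temperature `T`. -/
noncomputable def qubitProb (E T : ℝ) (j : Fin 2) : ℝ :=
  (if j = 0 then 1 else Real.exp (-E / T)) / (1 + Real.exp (-E / T))

/-!
With `D x y = |U x y|²`, the energy `tr (U ρ U† H)` is the linear cost `∑ E_x D_xy p_y` of the
doubly stochastic matrix `D`. By Birkhoff's theorem this cost is minimised at a permutation
matrix, which is itself unitary, so an optimal `U` makes `D` optimal on the Birkhoff polytope.
Shifting mass shows that an optimal `D` never charges two pairs `(x, y)`, `(x', y')` with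
`E_x' < E_x` and `p_y' < p_y`; a Hall-type count then bounds the energy of every `x` with
`D x y > 0` by comparing how many levels lie below a threshold with how many states are at least
as likely as `y`. For `y = e_1 ⊗ e_0` the strictly more likely states are exactly the levels
`e_0 ⊗ e_b` with `∑ b_j E_j < E_A T_B / T_A`, non-degeneracy leaves `y` alone at its probability,
and the feasible word supplies one more level below `E_A`: this pins the energies in the column
of `U` at `y` inside `(E_A T_B / T_A, E_A)`.
-/

open Matrix Finset

namespace Matrix

variable {ι : Type*} [Fintype ι]

def transportCost (e p : ι → ℝ) : Matrix ι ι ℝ →ₗ[ℝ] ℝ where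
  toFun D := e ⬝ᵥ D *ᵥ p
  map_add' D D' := by rw [add_mulVec, dotProduct_add]
  map_smul' c D := by rw [smul_mulVec, dotProduct_smul]; rfl

lemma transportCost_apply (e p : ι → ℝ) (D : Matrix ι ι ℝ) :
    transportCost e p D = ∑ x, ∑ y, e x * D x y * p y := by
  simp [transportCost, dotProduct, mulVec, mul_sum, mul_assoc]

variable [DecidableEq ι]

lemma transportCost_single (e p : ι → ℝ) (i j : ι) :
    transportCost e p (single i j 1) = e i * p j := by
  simp [transportCost, single_mulVec_eq, mul_comm]

theorem exists_transportCost_permMatrix_le {D : Matrix ι ι ℝ}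
    (hD : D ∈ doublyStochastic ℝ ι) (e p : ι → ℝ) :
    ∃ σ : Equiv.Perm ι, transportCost e p (σ.permMatrix ℝ) ≤ transportCost e p D := by
  rw [← SetLike.mem_coe, doublyStochastic_eq_convexHull_permMatrix] at hD
  obtain ⟨_, ⟨σ, rfl⟩, hσ⟩ :=
    ((transportCost e p).concaveOn convex_univ).exists_le_of_mem_convexHull (Set.subset_univ _) hD
  exact ⟨σ, hσ⟩

theorem add_smul_exchange_mem_doublyStochastic {D : Matrix ι ι ℝ}
    (hD : D ∈ doublyStochastic ℝ ι) {x x' y y' : ι} (hx : x ≠ x') (hy : y ≠ y') {δ : ℝ}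
    (hδ : 0 ≤ δ) (hxy : δ ≤ D x y) (hxy' : δ ≤ D x' y') :
    D + δ • (single x y' 1 + single x' y 1 - single x y 1 - single x' y' 1) ∈
      doublyStochastic ℝ ι := by
  rw [mem_doublyStochastic_iff_sum] at hD ⊢
  obtain ⟨hnn, hrow, hcol⟩ := hD
  refine ⟨fun a b => ?_, fun a => ?_, fun b => ?_⟩
  · have hab := hnn a b
    simp only [add_apply, smul_apply, sub_apply, single_apply, smul_eq_mul]
    split_ifs <;> grind
  · simp [Finset.sum_add_distrib, single_apply, hrow, ← Finset.mul_sum, ite_and]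
  · simp [Finset.sum_add_distrib, single_apply, hcol, ← Finset.mul_sum, ite_and]

theorem exists_pos_entry_of_card_le {D : Matrix ι ι ℝ} (hD : D ∈ doublyStochastic ℝ ι)
    {Y L : Finset ι} (hcard : #Y ≤ #L) {x y : ι} (hx : x ∉ L) (hy : y ∈ Y)
    (hxy : 0 < D x y) :
    ∃ x' ∈ L, ∃ y' ∉ Y, 0 < D x' y' := by
  by_contra! hvan
  obtain ⟨hnn, hrow, hcol⟩ := mem_doublyStochastic_iff_sum.mp hD
  have hL : ∑ x' ∈ L, ∑ y' ∈ Y, D x' y' = #L := by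
    rw [card_eq_sum_ones, Nat.cast_sum, Nat.cast_one]
    refine sum_congr rfl fun x' hx' => ?_
    rw [← hrow x']
    exact sum_subset (subset_univ _) fun y' _ hy' => le_antisymm (hvan x' hx' y' hy') (hnn _ _)
  have hY : ∑ x' ∈ L, ∑ y' ∈ Y, D x' y' < #Y := by
    rw [sum_comm (f := fun x' y' => D x' y'), card_eq_sum_ones, Nat.cast_sum, Nat.cast_one]
    refine sum_lt_sum (fun y' _ => ?_) ⟨y, hy, ?_⟩
    · rw [← hcol y']
      exact sum_le_sum_of_subset_of_nonneg (subset_univ _) fun _ _ _ => hnn _ _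
    · rw [← hcol y]
      exact sum_lt_sum_of_subset (subset_univ _) (mem_univ x) hx hxy
        fun _ _ _ => hnn _ _
  have : (#Y : ℝ) ≤ #L := by exact_mod_cast hcard
  linarith

section Optimal

variable {e p : ι → ℝ} {D : Matrix ι ι ℝ} (hD : D ∈ doublyStochastic ℝ ι)
  (hmin : IsMinOn (transportCost e p) (doublyStochastic ℝ ι) D)
include hD hmin

/-- Moving mass `δ` from `(x, y), (x', y')` to `(x, y'), (x', y)` changes the cost by
`-δ (e x - e x') (p y - p y')`. -/
theorem le_of_isMinOn_transportCost {x x' y y' : ι} (hxy : 0 < D x y) (hxy' : 0 < D x' y')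
    (he : e x' < e x) : p y ≤ p y' := by
  by_contra! hp
  set δ := min (D x y) (D x' y')
  have hδ : 0 < δ := lt_min hxy hxy'
  have hmem := add_smul_exchange_mem_doublyStochastic hD (fun h => he.ne' (congrArg e h))
    (fun h => hp.ne' (congrArg p h)) hδ.le (min_le_left _ _) (min_le_right _ _)
  have hcost := isMinOn_iff.mp hmin _ hmem
  simp only [map_add, map_sub, map_smul, transportCost_single, smul_eq_mul] at hcost
  nlinarith [mul_pos hδ (mul_pos (sub_pos.2 he) (sub_pos.2 hp))]

theorem lt_of_isMinOn_of_card_le {a y : ι} (hay : 0 < D a y) {t : ℝ}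
    (hcard : #{y' | p y ≤ p y'} ≤ #{x' | e x' < t}) : e a < t := by
  by_contra! hat
  obtain ⟨x', hx', y', hy', hpos⟩ :=
    exists_pos_entry_of_card_le hD hcard (by simpa using hat) (by simp) hay
  simp only [mem_filter, mem_univ, true_and, not_le] at hx' hy'
  exact hy'.not_ge (le_of_isMinOn_transportCost hD hmin hay hpos (hx'.trans_le hat))

theorem le_of_isMinOn_of_card_le {a y : ι} (hay : 0 < D a y) {t : ℝ}
    (hcard : #{x' | e x' < t} ≤ #{y' | p y < p y'}) : t ≤ e a := by
  by_contra! hat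
  obtain ⟨y', hy', x', hx', hpos⟩ :=
    exists_pos_entry_of_card_le (transpose_mem_doublyStochastic_iff.2 hD) hcard (by simp)
      (by simpa using hat) hay
  simp only [mem_filter, mem_univ, true_and, not_lt] at hx' hy'
  exact hy'.not_ge (le_of_isMinOn_transportCost hD hmin hpos hay (hat.trans_le hx'))

end Optimal

theorem permMatrix_mem_unitaryGroup (σ : Equiv.Perm ι) :
    σ.permMatrix ℂ ∈ unitaryGroup ι ℂ := by
  rw [mem_unitaryGroup_iff, star_eq_conjTranspose, conjTranspose_permMatrix, ← permMatrix_mul,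
    inv_mul_cancel, permMatrix_one]

omit [Fintype ι] in
theorem map_normSq_permMatrix (σ : Equiv.Perm ι) :
    (σ.permMatrix ℂ).map Complex.normSq = σ.permMatrix ℝ := by
  ext i j
  simp [PEquiv.toMatrix_apply, apply_ite Complex.normSq]

theorem map_normSq_mem_doublyStochastic {U : Matrix ι ι ℂ} (hU : U ∈ unitaryGroup ι ℂ) :
    U.map Complex.normSq ∈ doublyStochastic ℝ ι := by
  have hrow : ∀ i, ∑ j, (Complex.normSq (U i j) : ℂ) = 1 := fun i => by
    simpa [mul_apply, Complex.mul_conj] using congr_fun₂ (mem_unitaryGroup_iff.mp hU) i i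
  have hcol : ∀ j, ∑ i, (Complex.normSq (U i j) : ℂ) = 1 := fun j => by
    simpa [mul_apply, ← Complex.normSq_eq_conj_mul_self] using
      congr_fun₂ (mem_unitaryGroup_iff'.mp hU) j j
  exact mem_doublyStochastic_iff_sum.2 ⟨fun i j => Complex.normSq_nonneg _,
    fun i => by exact_mod_cast hrow i, fun j => by exact_mod_cast hcol j⟩

theorem re_trace_mul_diagonal_mul_star (e p : ι → ℝ) (V : Matrix ι ι ℂ) :
    (trace (V * diagonal (fun x => (p x : ℂ)) * star V * diagonal (fun x => (e x : ℂ)))).re =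
      transportCost e p (V.map Complex.normSq) := by
  simp only [transportCost_apply, map_apply, trace, diag_apply, mul_diagonal, Complex.re_sum]
  refine sum_congr rfl fun x _ => ?_
  rw [mul_apply, sum_mul, Complex.re_sum]
  refine sum_congr rfl fun y _ => ?_
  rw [mul_diagonal, star_apply, Complex.star_def, mul_right_comm (V x y), Complex.mul_conj]
  simp only [← Complex.ofReal_mul, Complex.ofReal_re]
  ring

theorem isMinOn_transportCost_map_normSq {e p : ι → ℝ} {U : Matrix ι ι ℂ}
    (hopt : ∀ V ∈ unitaryGroup ι ℂ,
      (trace (U * diagonal (fun x => (p x : ℂ)) * star U *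
          diagonal (fun x => (e x : ℂ)))).re ≤
        (trace (V * diagonal (fun x => (p x : ℂ)) * star V *
          diagonal (fun x => (e x : ℂ)))).re) :
    IsMinOn (transportCost e p) (doublyStochastic ℝ ι) (U.map Complex.normSq) := by
  refine isMinOn_iff.2 fun D hD => ?_
  obtain ⟨σ, hσ⟩ := exists_transportCost_permMatrix_le hD e p
  have hU := hopt _ (permMatrix_mem_unitaryGroup σ)
  rw [re_trace_mul_diagonal_mul_star, re_trace_mul_diagonal_mul_star, map_normSq_permMatrix] at hU
  exact hU.trans hσ

end Matrix

theorem mem_span_image_single_of_support_subset {R ι : Type*} [Semiring R] [Finite ι]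
    [DecidableEq ι] {v : ι → R} {S : Set ι} (h : Function.support v ⊆ S) :
    v ∈ Submodule.span R ((fun i => Pi.single i 1) '' S) := by
  have := (Pi.basisFun R ι).mem_span_image (m := v) (s := S)
  simp only [Pi.basisFun_apply] at this
  rw [this]
  intro i hi
  exact h (by simpa [Pi.basisFun_repr] using hi)

namespace KnapsackEngine

variable {n : ℕ}

def weight (Ec : Fin n → ℝ) (b : Fin n → Fin 2) : ℝ := ∑ j, ((b j : ℕ) : ℝ) * Ec j

def energy (E_A : ℝ) (Ec : Fin n → ℝ) (x : Fin 2 × (Fin n → Fin 2)) : ℝ :=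
  E_A * ((x.1 : ℕ) : ℝ) + weight Ec x.2

noncomputable def gibbsProb (E_A T_A T_B : ℝ) (Ec : Fin n → ℝ)
    (x : Fin 2 × (Fin n → Fin 2)) : ℝ :=
  qubitProb E_A T_A x.1 * ∏ j, qubitProb (Ec j) T_B (x.2 j)

noncomputable def reducedEnergy (E_A T_A T_B : ℝ) (Ec : Fin n → ℝ)
    (x : Fin 2 × (Fin n → Fin 2)) : ℝ :=
  E_A * ((x.1 : ℕ) : ℝ) / T_A + weight Ec x.2 / T_B

variable {E_A T_A T_B : ℝ} {Ec : Fin n → ℝ}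

lemma weight_nonneg (hEc : ∀ j, 0 ≤ Ec j) (b : Fin n → Fin 2) : 0 ≤ weight Ec b :=
  sum_nonneg fun j _ => mul_nonneg (Nat.cast_nonneg _) (hEc j)

lemma weight_eq_zero_iff (hEc : ∀ j, 0 < Ec j) {b : Fin n → Fin 2} :
    weight Ec b = 0 ↔ b = fun _ => 0 := by
  rw [weight, sum_eq_zero_iff_of_nonneg fun j _ => mul_nonneg (Nat.cast_nonneg _) (hEc j).le]
  simp only [mem_univ, true_imp_iff, mul_eq_zero, (hEc _).ne', or_false, Nat.cast_eq_zero,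
    Fin.val_eq_zero_iff, funext_iff]

@[simp] lemma weight_zero : weight Ec (fun _ => 0) = 0 := by simp [weight]

lemma qubitProb_eq (E T : ℝ) (j : Fin 2) :
    qubitProb E T j = Real.exp (-(E * ((j : ℕ) : ℝ)) / T) / (1 + Real.exp (-E / T)) := by
  fin_cases j <;> simp [qubitProb]

lemma gibbsProb_eq (E_A T_A T_B : ℝ) (Ec : Fin n → ℝ) (x : Fin 2 × (Fin n → Fin 2)) :
    gibbsProb E_A T_A T_B Ec x = Real.exp (-reducedEnergy E_A T_A T_B Ec x) /
      ((1 + Real.exp (-E_A / T_A)) * ∏ j, (1 + Real.exp (-Ec j / T_B))) := by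
  simp only [gibbsProb, reducedEnergy, weight, qubitProb_eq]
  rw [prod_div_distrib, ← Real.exp_sum, div_mul_div_comm, ← Real.exp_add, sum_div]
  congr 2
  simp only [neg_add, ← sum_neg_distrib, neg_div, mul_comm (Ec _)]

lemma gibbsProb_lt_gibbsProb_iff {x y : Fin 2 × (Fin n → Fin 2)} :
    gibbsProb E_A T_A T_B Ec x < gibbsProb E_A T_A T_B Ec y ↔
      reducedEnergy E_A T_A T_B Ec y < reducedEnergy E_A T_A T_B Ec x := by
  rw [gibbsProb_eq, gibbsProb_eq, div_lt_div_iff_of_pos_right (by positivity), Real.exp_lt_exp,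
    neg_lt_neg_iff]

lemma gibbsProb_le_gibbsProb_iff {x y : Fin 2 × (Fin n → Fin 2)} :
    gibbsProb E_A T_A T_B Ec x ≤ gibbsProb E_A T_A T_B Ec y ↔
      reducedEnergy E_A T_A T_B Ec y ≤ reducedEnergy E_A T_A T_B Ec x := by
  rw [gibbsProb_eq, gibbsProb_eq, div_le_div_iff_of_pos_right (by positivity), Real.exp_le_exp,
    neg_le_neg_iff]

@[simp] lemma energy_zero_mk (b : Fin n → Fin 2) : energy E_A Ec (0, b) = weight Ec b := by
  simp [energy]

lemma fst_eq_zero_of_energy_lt (hEc : ∀ j, 0 ≤ Ec j) {x : Fin 2 × (Fin n → Fin 2)}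
    (hx : energy E_A Ec x < E_A) : x.1 = 0 := by
  obtain ⟨b₀, b⟩ := x
  fin_cases b₀
  · rfl
  · simp [energy] at hx
    linarith [weight_nonneg hEc b]

lemma reducedEnergy_lt_hot_iff (hEc : ∀ j, 0 ≤ Ec j) (hTB : 0 < T_B)
    (hc : E_A * T_B / T_A < E_A) {x : Fin 2 × (Fin n → Fin 2)} :
    reducedEnergy E_A T_A T_B Ec x < reducedEnergy E_A T_A T_B Ec (1, fun _ => 0) ↔
      energy E_A Ec x < E_A * T_B / T_A := by
  obtain ⟨b₀, b⟩ := x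
  have hb := weight_nonneg hEc b
  fin_cases b₀
  · simp [reducedEnergy, div_lt_iff₀ hTB, div_mul_eq_mul_div]
  · simp only [reducedEnergy, energy, Fin.val_one, Nat.cast_one, mul_one, weight_zero,
      zero_div, add_zero]
    exact iff_of_false (by simp [div_nonneg hb hTB.le]) (by linarith)

lemma reducedEnergy_eq_hot_iff (hEc : ∀ j, 0 < Ec j) (hTB : 0 < T_B)
    (hnodeg : ¬ ∃ b, weight Ec b = E_A * T_B / T_A) {x : Fin 2 × (Fin n → Fin 2)} :
    reducedEnergy E_A T_A T_B Ec x = reducedEnergy E_A T_A T_B Ec (1, fun _ => 0) ↔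
      x = (1, fun _ => 0) := by
  obtain ⟨b₀, b⟩ := x
  fin_cases b₀
  · refine iff_of_false (fun h => hnodeg ⟨b, ?_⟩) (by simp)
    simpa [reducedEnergy, div_eq_iff hTB.ne', div_mul_eq_mul_div] using h
  · simp [reducedEnergy, hTB.ne', weight_eq_zero_iff hEc]

lemma filter_hot_lt_gibbsProb (hEc : ∀ j, 0 ≤ Ec j) (hTB : 0 < T_B)
    (hc : E_A * T_B / T_A < E_A) :
    univ.filter (fun x => gibbsProb E_A T_A T_B Ec (1, fun _ => 0) < gibbsProb E_A T_A T_B Ec x) =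
      univ.filter (fun x => energy E_A Ec x < E_A * T_B / T_A) := by
  refine filter_congr fun x _ => ?_
  rw [gibbsProb_lt_gibbsProb_iff, reducedEnergy_lt_hot_iff hEc hTB hc]

lemma filter_hot_le_gibbsProb (hEc : ∀ j, 0 < Ec j) (hTB : 0 < T_B)
    (hnodeg : ¬ ∃ b, weight Ec b = E_A * T_B / T_A) :
    univ.filter (fun x => gibbsProb E_A T_A T_B Ec (1, fun _ => 0) ≤ gibbsProb E_A T_A T_B Ec x) =
      insert (1, fun _ => 0) (univ.filter fun x =>
        gibbsProb E_A T_A T_B Ec (1, fun _ => 0) < gibbsProb E_A T_A T_B Ec x) := by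
  refine Finset.ext fun x => ?_
  simp only [mem_filter, mem_insert, mem_univ, true_and]
  rw [gibbsProb_le_gibbsProb_iff, gibbsProb_lt_gibbsProb_iff, le_iff_eq_or_lt,
    reducedEnergy_eq_hot_iff hEc hTB hnodeg]

lemma card_energy_lt_add_one_le
    (hfeas : ∃ b, E_A * T_B / T_A < weight Ec b ∧ weight Ec b < E_A) :
    #{x : Fin 2 × (Fin n → Fin 2) | energy E_A Ec x < E_A * T_B / T_A} + 1 ≤
      #{x : Fin 2 × (Fin n → Fin 2) | energy E_A Ec x < E_A} := by
  obtain ⟨b, hb_lo, hb_hi⟩ := hfeas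
  rw [← card_insert_of_notMem (a := (0, b)) (by simpa using hb_lo.le)]
  refine card_le_card (insert_subset (by simpa using hb_hi) fun x hx => ?_)
  simp only [mem_filter, mem_univ, true_and] at hx ⊢
  exact hx.trans (hb_lo.trans hb_hi)

theorem fst_eq_zero_and_weight_mem_Ioo_of_isMinOn (hEc : ∀ j, 0 < Ec j) (hTB : 0 < T_B)
    (hnodeg : ¬ ∃ b, weight Ec b = E_A * T_B / T_A)
    (hfeas : ∃ b, E_A * T_B / T_A < weight Ec b ∧ weight Ec b < E_A)
    {D : Matrix (Fin 2 × (Fin n → Fin 2)) (Fin 2 × (Fin n → Fin 2)) ℝ}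
    (hD : D ∈ doublyStochastic ℝ (Fin 2 × (Fin n → Fin 2)))
    (hmin : IsMinOn (transportCost (energy E_A Ec) (gibbsProb E_A T_A T_B Ec))
      (doublyStochastic ℝ (Fin 2 × (Fin n → Fin 2))) D)
    {a : Fin 2 × (Fin n → Fin 2)} (ha : 0 < D a (1, fun _ => 0)) :
    a.1 = 0 ∧ weight Ec a.2 ∈ Set.Ioo (E_A * T_B / T_A) E_A := by
  have hc : E_A * T_B / T_A < E_A := let ⟨_, hlo, hhi⟩ := hfeas; hlo.trans hhi
  have hEc' : ∀ j, 0 ≤ Ec j := fun j => (hEc j).le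
  have hlt : energy E_A Ec a < E_A := lt_of_isMinOn_of_card_le hD hmin ha <| by
    rw [filter_hot_le_gibbsProb hEc hTB hnodeg, card_insert_of_notMem (by simp),
      filter_hot_lt_gibbsProb hEc' hTB hc]
    exact card_energy_lt_add_one_le hfeas
  have hge : E_A * T_B / T_A ≤ energy E_A Ec a := le_of_isMinOn_of_card_le hD hmin ha <| by
    rw [filter_hot_lt_gibbsProb hEc' hTB hc]
  obtain ⟨a₀, b⟩ := a
  obtain rfl : a₀ = 0 := fst_eq_zero_of_energy_lt hEc' hlt
  rw [energy_zero_mk] at hlt hge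
  exact ⟨rfl, lt_of_le_of_ne hge fun h => hnodeg ⟨b, h.symm⟩, hlt⟩

end KnapsackEngine

open KnapsackEngine

theorem stmt_19_general (n : ℕ) (E_A : ℝ)
    (Ec : Fin n → ℝ) (hEc : ∀ j, 0 < Ec j)
    (T_A T_B : ℝ) (hTB : 0 < T_B)
    (hnodeg : ¬ ∃ b : Fin n → Fin 2, (∑ j, ((b j : ℕ) : ℝ) * Ec j) = E_A * T_B / T_A)
    (hfeas : ∃ b : Fin n → Fin 2,
      E_A * T_B / T_A < (∑ j, ((b j : ℕ) : ℝ) * Ec j) ∧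
      (∑ j, ((b j : ℕ) : ℝ) * Ec j) < E_A)
    (U : Matrix (Fin 2 × (Fin n → Fin 2)) (Fin 2 × (Fin n → Fin 2)) ℂ)
    (hU : U ∈ Matrix.unitaryGroup (Fin 2 × (Fin n → Fin 2)) ℂ)
    (hopt : ∀ V ∈ Matrix.unitaryGroup (Fin 2 × (Fin n → Fin 2)) ℂ,
      (Matrix.trace (U *
          Matrix.diagonal (fun x : Fin 2 × (Fin n → Fin 2) =>
            ((qubitProb E_A T_A x.1 * ∏ j, qubitProb (Ec j) T_B (x.2 j) : ℝ) : ℂ)) *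
          star U *
          Matrix.diagonal (fun x : Fin 2 × (Fin n → Fin 2) =>
            ((E_A * ((x.1 : ℕ) : ℝ) + ∑ j, ((x.2 j : ℕ) : ℝ) * Ec j : ℝ) : ℂ)))).re ≤
      (Matrix.trace (V *
          Matrix.diagonal (fun x : Fin 2 × (Fin n → Fin 2) =>
            ((qubitProb E_A T_A x.1 * ∏ j, qubitProb (Ec j) T_B (x.2 j) : ℝ) : ℂ)) *
          star V *
          Matrix.diagonal (fun x : Fin 2 × (Fin n → Fin 2) =>
            ((E_A * ((x.1 : ℕ) : ℝ) + ∑ j, ((x.2 j : ℕ) : ℝ) * Ec j : ℝ) : ℂ)))).re) :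
    U.mulVec (Pi.single ((1 : Fin 2), fun _ => (0 : Fin 2)) 1) ∈
      Submodule.span ℂ {v : (Fin 2 × (Fin n → Fin 2)) → ℂ |
        ∃ b : Fin n → Fin 2,
          (E_A * T_B / T_A < (∑ j, ((b j : ℕ) : ℝ) * Ec j) ∧
            (∑ j, ((b j : ℕ) : ℝ) * Ec j) < E_A) ∧
          v = Pi.single ((0 : Fin 2), b) 1} := by
  have hmin := isMinOn_transportCost_map_normSq (e := energy E_A Ec)
    (p := gibbsProb E_A T_A T_B Ec) hopt
  have hsupp : Function.support (U.col (1, fun _ => 0)) ⊆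
      {a | a.1 = 0 ∧ weight Ec a.2 ∈ Set.Ioo (E_A * T_B / T_A) E_A} := fun a ha =>
    fst_eq_zero_and_weight_mem_Ioo_of_isMinOn hEc hTB hnodeg hfeas
      (map_normSq_mem_doublyStochastic hU) hmin (Complex.normSq_pos.2 ha)
  rw [mulVec_single_one]
  refine Submodule.span_mono ?_ (mem_span_image_single_of_support_subset hsupp)
  rintro _ ⟨⟨a₀, b⟩, ⟨rfl, hb⟩, rfl⟩
  exact ⟨b, hb, rfl⟩

/-- **The optimal heat engine as an NP-solver (KNAPSACK).**
One hot qubit with gap `E_A` at `T_A` and `n` cold qubits with gaps `E_j` at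
`T_B`: if no word `b` satisfies `∑ b_j E_j = E_A T_B / T_A` and some word `b`
satisfies `E_A T_B / T_A < ∑ b_j E_j < E_A`, then every optimal heat engine
maps the basis vector `e_1 ⊗ e_{0…0}` into the span of the basis vectors
`e_0 ⊗ e_b` with `E_A T_B / T_A < ∑ b_j E_j < E_A`. -/
theorem stmt_19 (n : ℕ) (hn : 1 ≤ n) (E_A : ℝ) (hEA : 0 < E_A)
    (Ec : Fin n → ℝ) (hEc : ∀ j, 0 < Ec j)
    (T_A T_B : ℝ) (hTB : 0 < T_B) (hT : T_B < T_A)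
    (hnodeg : ¬ ∃ b : Fin n → Fin 2, (∑ j, ((b j : ℕ) : ℝ) * Ec j) = E_A * T_B / T_A)
    (hfeas : ∃ b : Fin n → Fin 2,
      E_A * T_B / T_A < (∑ j, ((b j : ℕ) : ℝ) * Ec j) ∧
      (∑ j, ((b j : ℕ) : ℝ) * Ec j) < E_A)
    (U : Matrix (Fin 2 × (Fin n → Fin 2)) (Fin 2 × (Fin n → Fin 2)) ℂ)
    (hU : U ∈ Matrix.unitaryGroup (Fin 2 × (Fin n → Fin 2)) ℂ)
    (hopt : ∀ V ∈ Matrix.unitaryGroup (Fin 2 × (Fin n → Fin 2)) ℂ,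
      (Matrix.trace (U *
          Matrix.diagonal (fun x : Fin 2 × (Fin n → Fin 2) =>
            ((qubitProb E_A T_A x.1 * ∏ j, qubitProb (Ec j) T_B (x.2 j) : ℝ) : ℂ)) *
          star U *
          Matrix.diagonal (fun x : Fin 2 × (Fin n → Fin 2) =>
            ((E_A * ((x.1 : ℕ) : ℝ) + ∑ j, ((x.2 j : ℕ) : ℝ) * Ec j : ℝ) : ℂ)))).re ≤
      (Matrix.trace (V *
          Matrix.diagonal (fun x : Fin 2 × (Fin n → Fin 2) =>
            ((qubitProb E_A T_A x.1 * ∏ j, qubitProb (Ec j) T_B (x.2 j) : ℝ) : ℂ)) *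
          star V *
          Matrix.diagonal (fun x : Fin 2 × (Fin n → Fin 2) =>
            ((E_A * ((x.1 : ℕ) : ℝ) + ∑ j, ((x.2 j : ℕ) : ℝ) * Ec j : ℝ) : ℂ)))).re) :
    U.mulVec (Pi.single ((1 : Fin 2), fun _ => (0 : Fin 2)) 1) ∈
      Submodule.span ℂ {v : (Fin 2 × (Fin n → Fin 2)) → ℂ |
        ∃ b : Fin n → Fin 2,
          (E_A * T_B / T_A < (∑ j, ((b j : ℕ) : ℝ) * Ec j) ∧
            (∑ j, ((b j : ℕ) : ℝ) * Ec j) < E_A) ∧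
          v = Pi.single ((0 : Fin 2), b) 1} :=
  stmt_19_general n E_A Ec hEc T_A T_B hTB hnodeg hfeas U hU hopt
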